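/- arXiv:1404.5814 — 6 statements merged into one kernel-verified Lean document; each statement's English description precedes it below -/
import Mathlib

section
/- Define ⟨t₁⟩(λ) = (2/D₁)·(1 + λ(1-(1-a)²)/(4D₂))·∑_{n≥1} 1/(n² + (λ/D₁)(1-(1-a)ⁿ)), with constants D₁, D₂ > 0 and 0 < a < 1. Then ⟨t₁⟩(λ) → ∞ as λ → ∞; more precisely ⟨t₁⟩(λ)/√λ remains bounded above and bounded below by positive constants for large λ. -/
/-!
With `M = λ / D₁`, the weights `M (1 - (1 - a)ⁿ)` lie between `M a` and `M`. Comparing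
`1 / (n² + w)` with the telescoping `2 (1 / (n - 1 + s) - 1 / (n + s))` when `w ≥ s²` bounds the
series by `2 / √(a M)`, while its first `⌊√M⌋` terms alone contribute at least `1 / (4 √M)`. The
prefactor grows linearly in `λ`, so `⟨t₁⟩(λ)` is of exact order `λ / √λ = √λ`.
-/

open Real Filter

/-- Mean exit time for a point-like target (ε = 0). -/
noncomputable def meanExitTime (D1 D2 a lam : ℝ) : ℝ :=
  2 / D1 * (1 + lam * (1 - (1 - a) ^ 2) / (4 * D2)) *
    ∑' n : ℕ+, 1 / ((n : ℝ) ^ 2 + lam / D1 * (1 - (1 - a) ^ (n : ℕ)))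

lemma one_div_add_one_sq_add_le {x s w : ℝ} (hx : 0 ≤ x) (hs : 0 < s) (hw : s ^ 2 ≤ w) :
    1 / ((x + 1) ^ 2 + w) ≤ 2 * (1 / (x + s) - 1 / (x + 1 + s)) := by
  have htel : 1 / (x + s) - 1 / (x + 1 + s) = 1 / ((x + s) * (x + 1 + s)) := by
    field_simp; ring
  rw [htel, mul_one_div, div_le_div_iff₀
    (add_pos_of_pos_of_nonneg (by positivity) ((sq_nonneg s).trans hw)) (by positivity)]
  nlinarith [sq_nonneg (x + 1 - s)]

section SeriesBounds

variable {w : ℕ → ℝ}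

lemma sum_range_one_div_add_one_sq_add_le {s : ℝ} (hs : 0 < s) (hw : ∀ n, s ^ 2 ≤ w n)
    (N : ℕ) :
    ∑ n ∈ Finset.range N, 1 / (((n : ℝ) + 1) ^ 2 + w n) ≤ 2 / s := by
  calc ∑ n ∈ Finset.range N, 1 / (((n : ℝ) + 1) ^ 2 + w n)
      ≤ ∑ n ∈ Finset.range N, 2 * (1 / ((n : ℝ) + s) - 1 / (((n + 1 : ℕ) : ℝ) + s)) :=
        Finset.sum_le_sum fun n _ => by
          push_cast; exact one_div_add_one_sq_add_le n.cast_nonneg hs (hw n)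
    _ = 2 * (1 / s - 1 / (N + s)) := by
        rw [← Finset.mul_sum, Finset.sum_range_sub' (fun n : ℕ => 1 / ((n : ℝ) + s))]
        simp
    _ ≤ 2 / s := by
        have : 0 ≤ 1 / ((N : ℝ) + s) := by positivity
        linarith [mul_one_div 2 s]

lemma summable_one_div_add_one_sq_add {s : ℝ} (hs : 0 < s) (hw : ∀ n, s ^ 2 ≤ w n) :
    Summable fun n : ℕ => 1 / (((n : ℝ) + 1) ^ 2 + w n) :=
  summable_of_sum_range_le
    (fun n => one_div_nonneg.2 (add_nonneg (sq_nonneg _) ((sq_nonneg s).trans (hw n))))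
    (sum_range_one_div_add_one_sq_add_le hs hw)

lemma tsum_one_div_add_one_sq_add_le {s : ℝ} (hs : 0 < s) (hw : ∀ n, s ^ 2 ≤ w n) :
    ∑' n : ℕ, 1 / (((n : ℝ) + 1) ^ 2 + w n) ≤ 2 / s :=
  Real.tsum_le_of_sum_range_le
    (fun n => one_div_nonneg.2 (add_nonneg (sq_nonneg _) ((sq_nonneg s).trans (hw n))))
    (sum_range_one_div_add_one_sq_add_le hs hw)

lemma le_tsum_one_div_add_one_sq_add {r : ℝ} (hr : 2 ≤ r) (hw₀ : ∀ n, 0 ≤ w n)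
    (hw : ∀ n, w n ≤ r ^ 2) (hsum : Summable fun n : ℕ => 1 / (((n : ℝ) + 1) ^ 2 + w n)) :
    1 / (4 * r) ≤ ∑' n : ℕ, 1 / (((n : ℝ) + 1) ^ 2 + w n) := by
  set N := ⌊r⌋₊
  have hN : r / 2 ≤ N := by linarith [Nat.lt_floor_add_one r]
  have hterm : ∀ n ∈ Finset.range N, 1 / (2 * r ^ 2) ≤ 1 / (((n : ℝ) + 1) ^ 2 + w n) := by
    intro n hn
    have hnN : ((n + 1 : ℕ) : ℝ) ≤ N := Nat.cast_le.2 (Finset.mem_range.1 hn)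
    have hnr : (n : ℝ) + 1 ≤ r := by
      push_cast at hnN; linarith [Nat.floor_le (by linarith : 0 ≤ r)]
    apply one_div_le_one_div_of_le (add_pos_of_pos_of_nonneg (by positivity) (hw₀ n))
    nlinarith [hw n]
  calc 1 / (4 * r) ≤ N * (1 / (2 * r ^ 2)) := by
        rw [mul_one_div, div_le_div_iff₀ (by positivity) (by positivity)]
        nlinarith
    _ ≤ ∑ n ∈ Finset.range N, 1 / (((n : ℝ) + 1) ^ 2 + w n) := by
        simpa using Finset.sum_le_sum hterm
    _ ≤ _ := hsum.sum_le_tsum _ fun n _ => one_div_nonneg.2 (add_nonneg (sq_nonneg _) (hw₀ n))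

end SeriesBounds

lemma meanExitTime_eq (D1 D2 a lam : ℝ) : meanExitTime D1 D2 a lam =
    2 / D1 * (1 + lam * (1 - (1 - a) ^ 2) / (4 * D2)) *
      ∑' n : ℕ, 1 / (((n : ℝ) + 1) ^ 2 + lam / D1 * (1 - (1 - a) ^ (n + 1))) := by
  rw [meanExitTime,
    tsum_pnat_eq_tsum_succ (f := fun k => 1 / ((k : ℝ) ^ 2 + lam / D1 * (1 - (1 - a) ^ k)))]
  push_cast
  rfl

lemma tsum_one_div_add_one_sq_add_geom_bounds {a r : ℝ} (ha : 0 < a) (ha1 : a ≤ 1)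
    (hr : 2 ≤ r) :
    1 / (4 * r) ≤ ∑' n : ℕ, 1 / (((n : ℝ) + 1) ^ 2 + r ^ 2 * (1 - (1 - a) ^ (n + 1))) ∧
      ∑' n : ℕ, 1 / (((n : ℝ) + 1) ^ 2 + r ^ 2 * (1 - (1 - a) ^ (n + 1))) ≤ 2 / (r * √a) := by
  have hgeom : ∀ n : ℕ, a ≤ 1 - (1 - a) ^ (n + 1) ∧ 1 - (1 - a) ^ (n + 1) ≤ 1 := fun n =>
    ⟨by linarith [pow_le_of_le_one (by linarith : 0 ≤ 1 - a) (by linarith) n.add_one_ne_zero],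
      by linarith [pow_nonneg (by linarith : 0 ≤ 1 - a) (n + 1)]⟩
  have hs : (r * √a) ^ 2 = r ^ 2 * a := by rw [mul_pow, sq_sqrt ha.le]
  have hlower : ∀ n : ℕ, (r * √a) ^ 2 ≤ r ^ 2 * (1 - (1 - a) ^ (n + 1)) := fun n => by
    rw [hs]; gcongr; exact (hgeom n).1
  have hpos : 0 < r * √a := by have := sqrt_pos.2 ha; positivity
  refine ⟨le_tsum_one_div_add_one_sq_add hr (fun n => (sq_nonneg _).trans (hlower n))
    (fun n => mul_le_of_le_one_right (sq_nonneg r) (hgeom n).2)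
    (summable_one_div_add_one_sq_add hpos hlower), tsum_one_div_add_one_sq_add_le hpos hlower⟩

lemma exists_mul_sqrt_le_meanExitTime_le_mul_sqrt {D1 D2 a : ℝ} (hD1 : 0 < D1) (hD2 : 0 < D2)
    (ha : 0 < a) (ha1 : a < 1) : ∃ c C : ℝ, 0 < c ∧ ∀ᶠ lam in atTop,
      c * √lam ≤ meanExitTime D1 D2 a lam ∧ meanExitTime D1 D2 a lam ≤ C * √lam := by
  obtain ⟨d, hd, rfl⟩ : ∃ d, 0 < d ∧ D1 = d ^ 2 := ⟨√D1, sqrt_pos.2 hD1, (sq_sqrt hD1.le).symm⟩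
  set k := (1 - (1 - a) ^ 2) / (4 * D2)
  have hk : 0 < k := div_pos (by nlinarith) (by positivity)
  refine ⟨k / (2 * d), 8 * k / (d * √a), by positivity, ?_⟩
  filter_upwards [eventually_ge_atTop (4 * d ^ 2),
    (tendsto_id.atTop_mul_const hk).eventually_ge_atTop 1] with lam hlam hlamk
  obtain ⟨t, ht, rfl⟩ : ∃ t, 0 ≤ t ∧ lam = t ^ 2 :=
    ⟨√lam, sqrt_nonneg _, (sq_sqrt (by nlinarith)).symm⟩
  have hr : 2 ≤ t / d := by
    rw [le_div_iff₀ hd]; nlinarith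
  obtain ⟨hS_ge, hS_le⟩ := tsum_one_div_add_one_sq_add_geom_bounds ha ha1.le hr
  have hS : 0 ≤ ∑' n : ℕ, 1 / (((n : ℝ) + 1) ^ 2 + (t / d) ^ 2 * (1 - (1 - a) ^ (n + 1))) :=
    le_trans (by positivity) hS_ge
  rw [meanExitTime_eq, ← div_pow, sqrt_sq ht,
    show t ^ 2 * (1 - (1 - a) ^ 2) / (4 * D2) = t ^ 2 * k by ring]
  simp only [id] at hlamk
  constructor
  · calc k / (2 * d) * t = 2 / d ^ 2 * (t ^ 2 * k) * (1 / (4 * (t / d))) := by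
          field_simp; ring
      _ ≤ _ := by gcongr; linarith
  · calc _ ≤ 2 / d ^ 2 * (2 * (t ^ 2 * k)) * (2 / (t / d * √a)) := by gcongr; linarith
      _ = 8 * k / (d * √a) * t := by field_simp; ring

theorem stmt_4 (D1 D2 a : ℝ) (hD1 : 0 < D1) (hD2 : 0 < D2) (ha : 0 < a) (ha1 : a < 1) :
    Tendsto (meanExitTime D1 D2 a) atTop atTop ∧
    (∃ c C : ℝ, 0 < c ∧ ∀ᶠ lam in atTop,
      c ≤ meanExitTime D1 D2 a lam / Real.sqrt lam ∧
        meanExitTime D1 D2 a lam / Real.sqrt lam ≤ C) := by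
  obtain ⟨c, C, hc, hbounds⟩ := exists_mul_sqrt_le_meanExitTime_le_mul_sqrt hD1 hD2 ha ha1
  refine ⟨tendsto_atTop_mono' atTop (hbounds.mono fun _ h => h.1)
    (tendsto_sqrt_atTop.const_mul_atTop hc), c, C, hc, ?_⟩
  filter_upwards [hbounds, eventually_gt_atTop 0] with lam ⟨hlow, hup⟩ hlam
  have hsqrt : 0 < √lam := sqrt_pos.2 hlam
  exact ⟨(le_div_iff₀ hsqrt).2 hlow, (div_le_iff₀ hsqrt).2 hup⟩
end

section
/- With ⟨t₁⟩(λ) = (2/D₁)·(1 + λ(1-(1-a)²)/(4D₂))·∑_{n≥1} 1/(n² + (λ/D₁)(1-(1-a)ⁿ)), the derivative at λ = 0 equals (2/D₁)·( (1-(1-a)²)/(4D₂) · π²/6 − (1/D₁)·∑_{n≥1}(1-(1-a)ⁿ)/n⁴ ). In particular this derivative is negative if and only if D₂ > D₁·π²(1-(1-a)²) / (24·∑_{n≥1}(1-(1-a)ⁿ)/n⁴). -/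
open Real Filter

/-!
Each term `1 / (n² + μ bₙ)` with `|bₙ| ≤ 1` has `μ`-derivative `-bₙ / (n² + μ bₙ)²`, which for
`|μ| < 1/2` is bounded by `4 / n⁴` because the denominator stays above `n² / 2`. This summable
bound lets the series be differentiated term by term at `μ = 0`, where `∑ 1/n² = π²/6` and the
derivative series is `-∑ bₙ / n⁴`. The product rule then gives the derivative of the mean exit
time, and clearing the positive denominators turns its sign into the threshold on `D₂`.
-/

theorem hasSum_pnat_one_div_sq : HasSum (fun n : ℕ+ => 1 / (n : ℝ) ^ 2) (π ^ 2 / 6) :=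
  (hasSum_pnat_iff (f := fun n : ℕ => 1 / (n : ℝ) ^ 2)).mpr (by simpa using hasSum_zeta_two)

theorem summable_pnat_one_div_pow_four : Summable (fun n : ℕ+ => 1 / (n : ℝ) ^ 4) :=
  summable_pnat_iff_summable_nat.mpr (Real.summable_one_div_nat_pow.mpr (by norm_num))

theorem abs_one_sub_pow_le_one {q : ℝ} (hq0 : 0 ≤ q) (hq1 : q ≤ 1) (n : ℕ) : |1 - q ^ n| ≤ 1 :=
  abs_le.mpr ⟨by linarith [pow_le_one₀ hq0 hq1 (n := n)], by linarith [pow_nonneg hq0 n]⟩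

theorem sq_div_two_le_sq_add_mul (n : ℕ+) {μ β : ℝ} (hμ : |μ| < 1 / 2) (hβ : |β| ≤ 1) :
    (n : ℝ) ^ 2 / 2 ≤ (n : ℝ) ^ 2 + μ * β := by
  have hn : (1 : ℝ) ≤ (n : ℝ) ^ 2 := one_le_pow₀ (Nat.one_le_cast.mpr n.pos)
  have hμβ : |μ * β| ≤ 1 / 2 := by
    rw [abs_mul]; nlinarith [abs_nonneg μ, abs_nonneg β]
  linarith [neg_abs_le (μ * β)]

section TermwiseDerivative

variable {b : ℕ+ → ℝ}

theorem hasDerivAt_one_div_sq_add_mul (n : ℕ+) {μ : ℝ} (hμ : (n : ℝ) ^ 2 + μ * b n ≠ 0) :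
    HasDerivAt (fun μ => 1 / ((n : ℝ) ^ 2 + μ * b n)) (-b n / ((n : ℝ) ^ 2 + μ * b n) ^ 2) μ := by
  simpa [one_div] using
    (((hasDerivAt_id μ).mul_const (b n)).const_add ((n : ℝ) ^ 2)).fun_inv hμ

theorem norm_div_sq_add_mul_le (hb : ∀ n, |b n| ≤ 1) (n : ℕ+) {μ : ℝ} (hμ : |μ| < 1 / 2) :
    ‖-b n / ((n : ℝ) ^ 2 + μ * b n) ^ 2‖ ≤ 4 * (1 / (n : ℝ) ^ 4) := by
  have hden := sq_div_two_le_sq_add_mul n hμ (hb n)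
  calc ‖-b n / ((n : ℝ) ^ 2 + μ * b n) ^ 2‖ = |b n| / ((n : ℝ) ^ 2 + μ * b n) ^ 2 := by
        rw [Real.norm_eq_abs, abs_div, abs_neg, abs_of_nonneg (sq_nonneg ((n : ℝ) ^ 2 + μ * b n))]
    _ ≤ 1 / ((n : ℝ) ^ 2 / 2) ^ 2 := by gcongr; exact hb n
    _ = 4 * (1 / (n : ℝ) ^ 4) := by field_simp; ring

theorem hasDerivAt_tsum_one_div_sq_add_mul (hb : ∀ n, |b n| ≤ 1) :
    HasDerivAt (fun μ => ∑' n : ℕ+, 1 / ((n : ℝ) ^ 2 + μ * b n))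
      (-∑' n : ℕ+, b n / (n : ℝ) ^ 4) 0 := by
  have hball : ∀ μ ∈ Metric.ball (0 : ℝ) (1 / 2), |μ| < 1 / 2 := fun μ hμ => by
    simpa using hμ
  have hne : ∀ (n : ℕ+) μ, μ ∈ Metric.ball (0 : ℝ) (1 / 2) → (n : ℝ) ^ 2 + μ * b n ≠ 0 :=
    fun n μ hμ => ((by positivity : (0 : ℝ) < (n : ℝ) ^ 2 / 2).trans_le
      (sq_div_two_le_sq_add_mul n (hball μ hμ) (hb n))).ne'
  have hzero : (0 : ℝ) ∈ Metric.ball (0 : ℝ) (1 / 2) := Metric.mem_ball_self (by norm_num)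
  refine (hasDerivAt_tsum_of_isPreconnected (summable_pnat_one_div_pow_four.mul_left 4)
    Metric.isOpen_ball (convex_ball 0 _).isPreconnected
    (fun n μ hμ => hasDerivAt_one_div_sq_add_mul n (hne n μ hμ))
    (fun n μ hμ => norm_div_sq_add_mul_le hb n (hball μ hμ)) hzero
    (by simpa using hasSum_pnat_one_div_sq.summable) hzero).congr_deriv ?_
  rw [← tsum_neg]
  congr 1 with n
  ring

end TermwiseDerivative

theorem hasDerivAt_meanExitTime_zero (D1 D2 : ℝ) {a : ℝ} (ha : 0 ≤ a) (ha1 : a ≤ 1) :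
    HasDerivAt (meanExitTime D1 D2 a)
      (2 / D1 * ((1 - (1 - a) ^ 2) / (4 * D2) * (π ^ 2 / 6) -
        1 / D1 * ∑' n : ℕ+, (1 - (1 - a) ^ (n : ℕ)) / (n : ℝ) ^ 4)) 0 := by
  have hseries := hasDerivAt_tsum_one_div_sq_add_mul
    (b := fun n : ℕ+ => 1 - (1 - a) ^ (n : ℕ))
    fun n => abs_one_sub_pow_le_one (by linarith) (by linarith) n
  have hscale : HasDerivAt (fun lam : ℝ => lam / D1) (1 / D1) 0 := by
    simpa using (hasDerivAt_id (0 : ℝ)).div_const D1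
  have hprefactor : HasDerivAt (fun lam : ℝ => 2 / D1 * (1 + lam * (1 - (1 - a) ^ 2) / (4 * D2)))
      (2 / D1 * ((1 - (1 - a) ^ 2) / (4 * D2))) 0 := by
    simpa using ((((hasDerivAt_id (0 : ℝ)).mul_const _).div_const (4 * D2)).const_add 1).const_mul
      (2 / D1)
  have h := hprefactor.mul (hseries.comp_of_eq (0 : ℝ) hscale (zero_div D1).symm)
  refine h.congr_deriv ?_
  simp only [Function.comp_apply, zero_div, zero_mul, add_zero, hasSum_pnat_one_div_sq.tsum_eq]
  ring

theorem tsum_one_sub_pow_div_pow_four_pos {q : ℝ} (hq0 : 0 ≤ q) (hq1 : q < 1) :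
    0 < ∑' n : ℕ+, (1 - q ^ (n : ℕ)) / (n : ℝ) ^ 4 := by
  have hpos : ∀ n : ℕ+, 0 < 1 - q ^ (n : ℕ) := fun n => sub_pos.mpr (pow_lt_one₀ hq0 hq1 n.ne_zero)
  refine Summable.tsum_pos ?_ (fun n => div_nonneg (hpos n).le (by positivity)) 1
    (div_pos (hpos 1) (by positivity))
  refine summable_pnat_one_div_pow_four.of_norm_bounded fun n => ?_
  rw [norm_div, Real.norm_eq_abs, norm_pow, Real.norm_natCast]
  gcongr
  exact abs_one_sub_pow_le_one hq0 hq1.le n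

theorem two_div_mul_sub_neg_iff {D1 D2 k T : ℝ} (hD1 : 0 < D1) (hD2 : 0 < D2) (hT : 0 < T) :
    2 / D1 * (k / (4 * D2) * (π ^ 2 / 6) - 1 / D1 * T) < 0 ↔ D2 > D1 * π ^ 2 * k / (24 * T) := by
  have hexpand : 2 / D1 * (k / (4 * D2) * (π ^ 2 / 6) - 1 / D1 * T) =
      (D1 * π ^ 2 * k - 24 * T * D2) / (12 * D1 ^ 2 * D2) := by
    field_simp; ring
  rw [hexpand, div_neg_iff, gt_iff_lt, div_lt_iff₀ (by positivity)]
  constructor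
  · rintro (⟨-, h⟩ | ⟨h, -⟩)
    · exact absurd h (not_lt.mpr (by positivity))
    · linarith
  · intro h
    exact Or.inr ⟨by linarith, by positivity⟩

theorem stmt_5 (D1 D2 a : ℝ) (hD1 : 0 < D1) (hD2 : 0 < D2) (ha : 0 < a) (ha1 : a < 1) :
    HasDerivAt (meanExitTime D1 D2 a)
      (2 / D1 * ((1 - (1 - a) ^ 2) / (4 * D2) * (π ^ 2 / 6) -
        1 / D1 * ∑' n : ℕ+, (1 - (1 - a) ^ (n : ℕ)) / (n : ℝ) ^ 4)) 0 ∧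
    (2 / D1 * ((1 - (1 - a) ^ 2) / (4 * D2) * (π ^ 2 / 6) -
        1 / D1 * ∑' n : ℕ+, (1 - (1 - a) ^ (n : ℕ)) / (n : ℝ) ^ 4) < 0 ↔
      D2 > D1 * π ^ 2 * (1 - (1 - a) ^ 2) /
        (24 * ∑' n : ℕ+, (1 - (1 - a) ^ (n : ℕ)) / (n : ℝ) ^ 4)) :=
  ⟨hasDerivAt_meanExitTime_zero D1 D2 ha.le ha1.le,
    two_div_mul_sub_neg_iff hD1 hD2 (tsum_one_sub_pow_div_pow_four_pos (by linarith) (by linarith))⟩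
end

section
/- Let T̃ be the operator on L²([0,π]) defined by (T̃f)(θ) = ∫_θ^{π-ε} ∫_0^{θ₁} f(θ₂) dθ₂ dθ₁ for 0 ≤ θ < π-ε and (T̃f)(θ) = 0 for π-ε ≤ θ ≤ π, where 0 ≤ ε < π. Then T̃ is a bounded self-adjoint non-negative operator on L²([0,π]). -/
open Real MeasureTheory

/-- The operator T̃ of the paper: (T̃f)(θ) = ∫_θ^{π-ε} ∫_0^{θ₁} f(θ₂) dθ₂ dθ₁ for θ < π-ε,
and 0 for θ ≥ π-ε. -/
noncomputable def Ttil (ε : ℝ) (f : ℝ → ℝ) (θ : ℝ) : ℝ :=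
  if θ < π - ε then ∫ θ₁ in θ..(π - ε), ∫ θ₂ in (0:ℝ)..θ₁, f θ₂ else 0

/-!
Write `F f t = ∫₀ᵗ f` and `a = π - ε`. Swapping the order of integration over the triangle
`{θ < t}` gives `⟨T̃f, g⟩ = ∫₀ᵃ F f · F g`, which is symmetric in `f, g` and non-negative for
`g = f`. Boundedness is pointwise: `|T̃f| ≤ π ‖f‖₁ ≤ π^{3/2} ‖f‖₂` on `[0, π]`, the last step by
Jensen's inequality.
-/

open Set

theorem setIntegral_Ioc_mul_integral_swap {a b : ℝ} {u v : ℝ → ℝ}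
    (hu : IntegrableOn u (Ioc a b)) (hv : IntegrableOn v (Ioc a b)) :
    ∫ x in Ioc a b, v x * ∫ t in x..b, u t = ∫ t in Ioc a b, u t * ∫ x in a..t, v x := by
  set Φ : ℝ × ℝ → ℝ := {p | p.1 < p.2}.indicator fun p => v p.1 * u p.2
  have hΦ : Integrable Φ ((volume.restrict (Ioc a b)).prod (volume.restrict (Ioc a b))) :=
    (hv.mul_prod hu).indicator (measurableSet_lt measurable_fst measurable_snd)
  have inner_snd : ∀ x ∈ Ioc a b, v x * ∫ t in x..b, u t = ∫ t in Ioc a b, Φ (x, t) := by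
    intro x hx
    have : (fun t => Φ (x, t)) = (Ioi x).indicator fun t => v x * u t := by
      ext t; by_cases h : x < t <;> simp [Φ, h]
    rw [this, setIntegral_indicator measurableSet_Ioi, Ioc_inter_Ioi, sup_eq_right.2 hx.1.le,
      intervalIntegral.integral_of_le hx.2, integral_const_mul]
  have inner_fst : ∀ t ∈ Ioc a b, ∫ x in Ioc a b, Φ (x, t) = u t * ∫ x in a..t, v x := by
    intro t ht
    have : (fun x => Φ (x, t)) = (Iio t).indicator fun x => v x * u t := by
      ext x; by_cases h : x < t <;> simp [Φ, h]
    have hIoo : Ioc a b ∩ Iio t = Ioo a t := by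
      ext x; simp only [mem_inter_iff, mem_Ioc, mem_Iio, mem_Ioo]; grind [ht.2]
    rw [this, setIntegral_indicator measurableSet_Iio, hIoo, ← integral_Ioc_eq_integral_Ioo,
      ← intervalIntegral.integral_of_le ht.1.le, intervalIntegral.integral_mul_const, mul_comm]
  calc ∫ x in Ioc a b, v x * ∫ t in x..b, u t
      = ∫ x in Ioc a b, ∫ t in Ioc a b, Φ (x, t) :=
        setIntegral_congr_fun measurableSet_Ioc inner_snd
    _ = ∫ t in Ioc a b, ∫ x in Ioc a b, Φ (x, t) := integral_integral_swap hΦ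
    _ = ∫ t in Ioc a b, u t * ∫ x in a..t, v x :=
        setIntegral_congr_fun measurableSet_Ioc inner_fst

theorem sq_integral_abs_le_measureReal_mul_integral_sq {α : Type*} [MeasurableSpace α]
    {μ : Measure α} [IsFiniteMeasure μ] {f : α → ℝ} (hf : MemLp f 2 μ) :
    (∫ x, |f x| ∂μ) ^ 2 ≤ μ.real univ * ∫ x, f x ^ 2 ∂μ := by
  rcases eq_zero_or_neZero μ with rfl | hμ
  · simp
  have hm : 0 < μ.real univ := by
    simp [measureReal_def, ENNReal.toReal_pos_iff, measure_lt_top, NeZero.ne μ]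
  have jensen : (⨍ x, |f x| ∂μ) ^ 2 ≤ ⨍ x, |f x| ^ 2 ∂μ :=
    (convexOn_pow 2).map_average_le (continuousOn_pow 2) isClosed_Ici
      (.of_forall fun x => abs_nonneg (f x)) (hf.integrable one_le_two).abs
      (by simpa only [Function.comp_def, sq_abs] using hf.integrable_sq)
  simp only [average_eq, smul_eq_mul, sq_abs] at jensen
  rw [mul_pow, inv_pow, ← div_eq_inv_mul, ← div_eq_inv_mul, div_le_div_iff₀ (by positivity) hm]
    at jensen
  nlinarith

theorem abs_intervalIntegral_le_setIntegral_Icc_abs {f : ℝ → ℝ} {a b x : ℝ}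
    (hf : IntegrableOn f (Icc a b)) (hx : x ∈ Icc a b) :
    |∫ t in a..x, f t| ≤ ∫ t in Icc a b, |f t| :=
  calc |∫ t in a..x, f t| ≤ ∫ t in a..x, |f t| :=
        intervalIntegral.abs_integral_le_integral_abs hx.1
    _ = ∫ t in Ioc a x, |f t| := intervalIntegral.integral_of_le hx.1
    _ ≤ ∫ t in Icc a b, |f t| :=
        setIntegral_mono_set hf.abs (.of_forall fun t => abs_nonneg (f t))
          (Ioc_subset_Icc_self.trans (Icc_subset_Icc le_rfl hx.2)).eventuallyLE

theorem Ttil_eq_of_le (ε : ℝ) (f : ℝ → ℝ) {θ : ℝ} (hθ : θ ≤ π - ε) :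
    Ttil ε f θ = ∫ t in θ..(π - ε), ∫ s in (0:ℝ)..t, f s := by
  rcases hθ.lt_or_eq with h | rfl
  · exact if_pos h
  · rw [Ttil, if_neg (lt_irrefl _), intervalIntegral.integral_same]

theorem integral_Ttil_mul {ε : ℝ} (hε0 : 0 ≤ ε) {f g : ℝ → ℝ} (hf : IntegrableOn f (Icc 0 π))
    (hg : IntegrableOn g (Icc 0 π)) :
    ∫ θ in Icc 0 π, Ttil ε f θ * g θ =
      ∫ t in Ioc 0 (π - ε), (∫ s in (0:ℝ)..t, f s) * ∫ s in (0:ℝ)..t, g s := by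
  have hsub : Ioc 0 (π - ε) ⊆ Ioc 0 π := Ioc_subset_Ioc_right (by linarith)
  have hF : IntegrableOn (fun t => ∫ s in (0:ℝ)..t, f s) (Icc 0 π) := by
    rw [← uIcc_of_le pi_pos.le] at hf ⊢
    exact (intervalIntegral.continuousOn_primitive_interval hf).integrableOn_uIcc
  calc ∫ θ in Icc 0 π, Ttil ε f θ * g θ = ∫ θ in Ioc 0 π, Ttil ε f θ * g θ :=
        integral_Icc_eq_integral_Ioc
    _ = ∫ θ in Ioc 0 (π - ε), Ttil ε f θ * g θ := by
        refine setIntegral_eq_of_subset_of_forall_sdiff_eq_zero measurableSet_Ioc hsub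
          fun θ hθ => ?_
        rw [Ttil, if_neg fun h => hθ.2 ⟨hθ.1.1, h.le⟩, zero_mul]
    _ = ∫ θ in Ioc 0 (π - ε), g θ * ∫ t in θ..(π - ε), ∫ s in (0:ℝ)..t, f s :=
        setIntegral_congr_fun measurableSet_Ioc fun θ hθ => by
          rw [Ttil_eq_of_le ε f hθ.2, mul_comm]
    _ = _ := setIntegral_Ioc_mul_integral_swap (hF.mono_set (hsub.trans Ioc_subset_Icc_self))
          (hg.mono_set (hsub.trans Ioc_subset_Icc_self))

theorem abs_Ttil_le {ε : ℝ} (hε0 : 0 ≤ ε) {f : ℝ → ℝ} (hf : IntegrableOn f (Icc 0 π))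
    {θ : ℝ} (hθ : θ ∈ Icc 0 π) : |Ttil ε f θ| ≤ π * ∫ t in Icc 0 π, |f t| := by
  have hM : 0 ≤ ∫ t in Icc 0 π, |f t| :=
    setIntegral_nonneg measurableSet_Icc fun t _ => abs_nonneg _
  unfold Ttil
  split_ifs with h
  · have hF : ∀ x ∈ uIoc θ (π - ε), ‖∫ t in (0:ℝ)..x, f t‖ ≤ ∫ t in Icc 0 π, |f t| := by
      intro x hx
      rw [uIoc_of_le h.le] at hx
      exact abs_intervalIntegral_le_setIntegral_Icc_abs hf
        ⟨hθ.1.trans hx.1.le, by linarith [hx.2]⟩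
    calc |∫ t in θ..(π - ε), ∫ s in (0:ℝ)..t, f s|
        ≤ (∫ t in Icc 0 π, |f t|) * |π - ε - θ| :=
          intervalIntegral.norm_integral_le_of_norm_le_const hF
      _ ≤ π * ∫ t in Icc 0 π, |f t| := by
          rw [abs_of_pos (sub_pos.2 h), mul_comm]
          exact mul_le_mul_of_nonneg_right (by linarith [hθ.1]) hM
  · rw [abs_zero]; exact mul_nonneg pi_pos.le hM

theorem integral_Ttil_sq_le {ε : ℝ} (hε0 : 0 ≤ ε) {f : ℝ → ℝ}
    (hf : MemLp f 2 (volume.restrict (Icc 0 π))) :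
    ∫ θ in Icc 0 π, Ttil ε f θ ^ 2 ≤ π ^ 4 * ∫ θ in Icc 0 π, f θ ^ 2 := by
  set M := ∫ t in Icc 0 π, |f t|
  have hvol : volume.real (Icc 0 π) = π := by simp [pi_pos.le]
  have hTtil : ∀ θ ∈ Icc 0 π, Ttil ε f θ ^ 2 ≤ (π * M) ^ 2 := fun θ hθ => by
    simpa only [sq_abs] using
      pow_le_pow_left₀ (abs_nonneg _) (abs_Ttil_le hε0 (hf.integrable one_le_two) hθ) 2
  have hM : M ^ 2 ≤ π * ∫ θ in Icc 0 π, f θ ^ 2 := by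
    simpa [hvol] using sq_integral_abs_le_measureReal_mul_integral_sq hf
  calc ∫ θ in Icc 0 π, Ttil ε f θ ^ 2 ≤ ∫ _ in Icc 0 π, (π * M) ^ 2 :=
        integral_mono_of_nonneg (.of_forall fun θ => sq_nonneg _) (integrable_const _)
          ((ae_restrict_mem measurableSet_Icc).mono hTtil)
    _ = π ^ 3 * M ^ 2 := by rw [setIntegral_const, hvol, smul_eq_mul]; ring
    _ ≤ π ^ 3 * (π * ∫ θ in Icc 0 π, f θ ^ 2) := by gcongr
    _ = π ^ 4 * ∫ θ in Icc 0 π, f θ ^ 2 := by ring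

theorem stmt_7_general (ε : ℝ) (hε0 : 0 ≤ ε) :
    (∃ C : ℝ, 0 ≤ C ∧ ∀ f : ℝ → ℝ, MemLp f 2 (volume.restrict (Set.Icc 0 π)) →
      (∫ θ in Set.Icc (0:ℝ) π, (Ttil ε f θ) ^ 2) ≤ C * ∫ θ in Set.Icc (0:ℝ) π, (f θ) ^ 2) ∧
    (∀ f g : ℝ → ℝ, MemLp f 2 (volume.restrict (Set.Icc 0 π)) →
      MemLp g 2 (volume.restrict (Set.Icc 0 π)) →
      (∫ θ in Set.Icc (0:ℝ) π, Ttil ε f θ * g θ) =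
        ∫ θ in Set.Icc (0:ℝ) π, f θ * Ttil ε g θ) ∧
    (∀ f : ℝ → ℝ, MemLp f 2 (volume.restrict (Set.Icc 0 π)) →
      0 ≤ ∫ θ in Set.Icc (0:ℝ) π, Ttil ε f θ * f θ) := by
  refine ⟨⟨π ^ 4, by positivity, fun f hf => integral_Ttil_sq_le hε0 hf⟩, fun f g hf hg => ?_,
    fun f hf => ?_⟩
  · have hfi := hf.integrable one_le_two
    have hgi := hg.integrable one_le_two
    simp_rw [mul_comm (f _)]
    rw [integral_Ttil_mul hε0 hfi hgi, integral_Ttil_mul hε0 hgi hfi]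
    simp_rw [mul_comm]
  · rw [integral_Ttil_mul hε0 (hf.integrable one_le_two) (hf.integrable one_le_two)]
    exact setIntegral_nonneg measurableSet_Ioc fun t _ => mul_self_nonneg _

theorem stmt_7 (ε : ℝ) (hε0 : 0 ≤ ε) (hε : ε < π) :
    (∃ C : ℝ, 0 ≤ C ∧ ∀ f : ℝ → ℝ, MemLp f 2 (volume.restrict (Set.Icc 0 π)) →
      (∫ θ in Set.Icc (0:ℝ) π, (Ttil ε f θ) ^ 2) ≤ C * ∫ θ in Set.Icc (0:ℝ) π, (f θ) ^ 2) ∧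
    (∀ f g : ℝ → ℝ, MemLp f 2 (volume.restrict (Set.Icc 0 π)) →
      MemLp g 2 (volume.restrict (Set.Icc 0 π)) →
      (∫ θ in Set.Icc (0:ℝ) π, Ttil ε f θ * g θ) =
        ∫ θ in Set.Icc (0:ℝ) π, f θ * Ttil ε g θ) ∧
    (∀ f : ℝ → ℝ, MemLp f 2 (volume.restrict (Set.Icc 0 π)) →
      0 ≤ ∫ θ in Set.Icc (0:ℝ) π, Ttil ε f θ * f θ) :=
  stmt_7_general ε hε0
end

section
/- Let A and B be compact self-adjoint non-negative operators on a Hilbert space with eigenvalue sequences λₙ(A) and λₙ(B) (in non-increasing order). Suppose λₙ(A) ~ c·n^{−s} as n → ∞ for constants c > 0, s > 0, and λ_N(B) ≤ ρ^N for some 0 ≤ ρ < 1. Then λₙ(A+B) ~ c·n^{−s} as n → ∞. -/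
/-!
The lower bound `λₙ(A) ≤ λₙ(A + B)` is monotonicity of the max-min values in the operator.
For the upper bound, let `S` be spanned by `N` top eigenvectors of `B`, found one at a time as
eigenvectors of `B` restricted to the orthogonal complement of the previous ones (the norm of a
nonzero compact positive operator is an eigenvalue). Then `⟪B x, x⟫ ≤ λ_N(B) ‖x‖²` on `Sᗮ`, and
every `n`-dimensional `F` meets `Sᗮ` in dimension at least `n - N`, whence
`λₙ(A + B) ≤ λ_{n-N}(A) + λ_N(B)`. With `N = ⌊√n⌋`, `ρ ^ N = o(n ^ (-s))` while `(n - N) / n → 1`,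
so both bounds are `c n ^ (-s) (1 + o(1))`.
-/

open RealInnerProductSpace Filter

/-- The n-th largest eigenvalue of a self-adjoint operator, via the max-min
variational characterization. -/
noncomputable def lambdaN {H : Type*} [NormedAddCommGroup H] [InnerProductSpace ℝ H]
    (A : H →L[ℝ] H) (n : ℕ) : ℝ :=
  ⨆ F : {F : Submodule ℝ H // Module.finrank ℝ F = n},
    ⨅ x : {x : H // x ∈ F.1 ∧ x ≠ 0}, ⟪A x.1, x.1⟫ / ⟪x.1, x.1⟫

section LinearAlgebra

open Module Submodule

variable {K V W : Type*} [DivisionRing K] [AddCommGroup V] [Module K V] [AddCommGroup W]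
  [Module K W]

theorem Submodule.finrank_sub_le_finrank_inf_ker (L : Submodule K V) [FiniteDimensional K L]
    (f : V →ₗ[K] W) [FiniteDimensional K W] :
    finrank K L - finrank K W ≤ finrank K ↥(L ⊓ LinearMap.ker f) := by
  have h := (f.domRestrict L).finrank_range_add_finrank_ker
  rw [LinearMap.ker_domRestrict, ← finrank_map_subtype_eq, map_comap_subtype] at h
  have := finrank_le (f.domRestrict L).range
  omega

theorem Submodule.exists_le_finrank_eq (L : Submodule K V) [FiniteDimensional K L] {k : ℕ}
    (hk : k ≤ finrank K L) : ∃ M ≤ L, finrank K M = k := by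
  let b := finBasis K L
  refine ⟨span K (Set.range fun i : Fin k => (b (Fin.castLE hk i) : V)), ?_, ?_⟩
  · rw [span_le]
    rintro _ ⟨i, rfl⟩
    exact (b _).2
  · rw [finrank_span_eq_card, Fintype.card_fin]
    exact (b.linearIndependent.comp _ (Fin.castLE_injective hk)).map' L.subtype L.ker_subtype

end LinearAlgebra

section Perturbation

open Module Submodule

variable {H : Type*} [NormedAddCommGroup H] [InnerProductSpace ℝ H]

theorem abs_inner_apply_self_le (T : H →L[ℝ] H) (x : H) : |⟪T x, x⟫| ≤ ‖T‖ * ‖x‖ ^ 2 :=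
  calc |⟪T x, x⟫| ≤ ‖T x‖ * ‖x‖ := abs_real_inner_le_norm _ _
    _ ≤ ‖T‖ * ‖x‖ * ‖x‖ := by gcongr; exact T.le_opNorm x
    _ = ‖T‖ * ‖x‖ ^ 2 := by ring

theorem abs_inner_apply_self_div_le (T : H →L[ℝ] H) (x : H) : |⟪T x, x⟫ / ⟪x, x⟫| ≤ ‖T‖ := by
  rw [abs_div, real_inner_self_eq_norm_sq, abs_of_nonneg (sq_nonneg ‖x‖)]
  exact div_le_of_le_mul₀ (by positivity) (norm_nonneg T) (abs_inner_apply_self_le T x)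

noncomputable def infRayleigh (T : H →L[ℝ] H) (F : Submodule ℝ H) : ℝ :=
  ⨅ x : {x : H // x ∈ F ∧ x ≠ 0}, ⟪T x.1, x.1⟫ / ⟪x.1, x.1⟫

theorem bddBelow_range_rayleigh (T : H →L[ℝ] H) (F : Submodule ℝ H) :
    BddBelow (Set.range fun x : {x : H // x ∈ F ∧ x ≠ 0} => ⟪T x.1, x.1⟫ / ⟪x.1, x.1⟫) :=
  ⟨-‖T‖, by rintro _ ⟨x, rfl⟩; exact neg_le_of_abs_le (abs_inner_apply_self_div_le T x.1)⟩

theorem infRayleigh_le {T : H →L[ℝ] H} {F : Submodule ℝ H} {x : H} (hx : x ∈ F) (hx0 : x ≠ 0) :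
    infRayleigh T F ≤ ⟪T x, x⟫ / ⟪x, x⟫ :=
  ciInf_le (bddBelow_range_rayleigh T F) ⟨x, hx, hx0⟩

theorem le_infRayleigh {T : H →L[ℝ] H} {F : Submodule ℝ H} {c : ℝ} (hF : F ≠ ⊥)
    (h : ∀ x ∈ F, x ≠ 0 → c ≤ ⟪T x, x⟫ / ⟪x, x⟫) : c ≤ infRayleigh T F := by
  obtain ⟨x, hx, hx0⟩ := exists_mem_ne_zero_of_ne_bot hF
  have : Nonempty {x : H // x ∈ F ∧ x ≠ 0} := ⟨⟨x, hx, hx0⟩⟩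
  exact le_ciInf fun x => h x.1 x.2.1 x.2.2

theorem infRayleigh_le_norm (T : H →L[ℝ] H) (F : Submodule ℝ H) : infRayleigh T F ≤ ‖T‖ := by
  rcases isEmpty_or_nonempty {x : H // x ∈ F ∧ x ≠ 0} with h | ⟨x, hx, hx0⟩
  · rw [infRayleigh, Real.iInf_of_isEmpty]
    exact norm_nonneg T
  · exact (infRayleigh_le hx hx0).trans (le_of_abs_le (abs_inner_apply_self_div_le T x))

theorem bddAbove_range_infRayleigh (T : H →L[ℝ] H) (n : ℕ) :
    BddAbove (Set.range fun F : {F : Submodule ℝ H // finrank ℝ F = n} => infRayleigh T F.1) :=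
  ⟨‖T‖, by rintro _ ⟨F, rfl⟩; exact infRayleigh_le_norm T F.1⟩

theorem infRayleigh_le_lambdaN (T : H →L[ℝ] H) {F : Submodule ℝ H} {n : ℕ}
    (hF : finrank ℝ F = n) : infRayleigh T F ≤ lambdaN T n :=
  le_ciSup (bddAbove_range_infRayleigh T n) ⟨F, hF⟩

theorem lambdaN_le {T : H →L[ℝ] H} {n : ℕ} {c : ℝ} (hc : 0 ≤ c)
    (h : ∀ F : Submodule ℝ H, finrank ℝ F = n → infRayleigh T F ≤ c) : lambdaN T n ≤ c :=
  Real.iSup_le (fun F => h F.1 F.2) hc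

theorem lambdaN_nonneg {T : H →L[ℝ] H} (hT : ∀ x, 0 ≤ ⟪T x, x⟫) (n : ℕ) : 0 ≤ lambdaN T n :=
  Real.iSup_nonneg fun _ => Real.iInf_nonneg fun x => div_nonneg (hT x.1) real_inner_self_nonneg

theorem lambdaN_mono {T T' : H →L[ℝ] H} (h : ∀ x, ⟪T x, x⟫ ≤ ⟪T' x, x⟫) (n : ℕ) :
    lambdaN T n ≤ lambdaN T' n :=
  ciSup_mono (bddAbove_range_infRayleigh T' n) fun F =>
    ciInf_mono (bddBelow_range_rayleigh T F.1) fun x =>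
      div_le_div_of_nonneg_right (h x.1) real_inner_self_nonneg

theorem lambdaN_le_lambdaN_add {A B : H →L[ℝ] H} (hBpos : ∀ x, 0 ≤ ⟪B x, x⟫) (n : ℕ) :
    lambdaN A n ≤ lambdaN (A + B) n :=
  lambdaN_mono (fun x => by rw [add_apply, inner_add_left]; linarith [hBpos x]) n

theorem Submodule.finrank_sup_span_orthogonal {S : Submodule ℝ H} [FiniteDimensional ℝ S] {e : H}
    (he : e ∈ Sᗮ) (he0 : e ≠ 0) : finrank ℝ ↥(S ⊔ span ℝ {e}) = finrank ℝ S + 1 := by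
  have hdisj : S ⊓ span ℝ {e} = ⊥ :=
    eq_bot_iff.2 <| (inf_le_inf_left S ((span_singleton_le_iff_mem e _).2 he)).trans
      S.inf_orthogonal_eq_bot.le
  have := finrank_sup_add_finrank_inf_eq S (span ℝ {e})
  rwa [hdisj, finrank_bot, add_zero, finrank_span_singleton he0] at this

structure IsSpectralCut (B : H →L[ℝ] H) (S : Submodule ℝ H) (m : ℝ) : Prop where
  mapsTo : ∀ x ∈ S, B x ∈ S
  inner_le : ∀ x ∈ Sᗮ, ⟪B x, x⟫ ≤ m * ‖x‖ ^ 2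
  le_inner : ∀ x ∈ S, m * ‖x‖ ^ 2 ≤ ⟪B x, x⟫

namespace IsSpectralCut

variable {B : H →L[ℝ] H} {S : Submodule ℝ H} {m : ℝ}

theorem bot (B : H →L[ℝ] H) : IsSpectralCut B ⊥ ‖B‖ where
  mapsTo x hx := by simp [(Submodule.mem_bot ℝ).1 hx]
  inner_le x _ := le_of_abs_le (abs_inner_apply_self_le B x)
  le_inner x hx := by simp [(Submodule.mem_bot ℝ).1 hx]

theorem sup_span_singleton (h : IsSpectralCut B S m) {e : H} {μ : ℝ} (he : e ∈ Sᗮ) (he0 : e ≠ 0)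
    (hBe : B e = μ • e) (hμ : ∀ x ∈ Sᗮ, ⟪B x, x⟫ ≤ μ * ‖x‖ ^ 2) :
    IsSpectralCut B (S ⊔ span ℝ {e}) μ where
  mapsTo x hx := by
    obtain ⟨u, hu, v, hv, rfl⟩ := mem_sup.1 hx
    obtain ⟨t, rfl⟩ := mem_span_singleton.1 hv
    rw [map_add, map_smul, hBe, smul_smul]
    exact add_mem_sup (h.mapsTo u hu) (smul_mem _ _ (mem_span_singleton_self e))
  inner_le x hx := hμ x (orthogonal_le le_sup_left hx)
  le_inner x hx := by
    obtain ⟨u, hu, v, hv, rfl⟩ := mem_sup.1 hx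
    obtain ⟨t, rfl⟩ := mem_span_singleton.1 hv
    have hue : ⟪u, e⟫ = 0 := he u hu
    have hBue : ⟪B u, e⟫ = 0 := he _ (h.mapsTo u hu)
    have hee : ⟪e, e⟫ = ‖e‖ ^ 2 := real_inner_self_eq_norm_sq e
    have hμm : μ ≤ m := by
      have := h.inner_le e he
      rw [hBe, real_inner_smul_left, hee] at this
      exact le_of_mul_le_mul_right this (by positivity)
    have hnorm : ‖u + t • e‖ ^ 2 = ‖u‖ ^ 2 + t ^ 2 * ‖e‖ ^ 2 := by
      rw [norm_add_sq_real, real_inner_smul_right, hue, norm_smul, Real.norm_eq_abs, mul_pow,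
        sq_abs]
      ring
    have hB : ⟪B (u + t • e), u + t • e⟫ = ⟪B u, u⟫ + t ^ 2 * μ * ‖e‖ ^ 2 := by
      rw [map_add, map_smul, hBe]
      simp only [inner_add_left, inner_add_right, real_inner_smul_left, real_inner_smul_right,
        hBue, real_inner_comm u e, hue, hee]
      ring
    rw [hnorm, hB]
    linarith [h.le_inner u hu, mul_le_mul_of_nonneg_right hμm (sq_nonneg ‖u‖)]

theorem le_lambdaN (h : IsSpectralCut B S m) {N : ℕ} (hS : finrank ℝ S = N) (hN : 0 < N) :
    m ≤ lambdaN B N := by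
  have hS0 : S ≠ ⊥ := by
    rintro rfl
    rw [finrank_bot] at hS
    omega
  refine (le_infRayleigh hS0 fun x hx hx0 => ?_).trans (infRayleigh_le_lambdaN B hS)
  rw [le_div_iff₀ (real_inner_self_pos.2 hx0), real_inner_self_eq_norm_sq]
  exact h.le_inner x hx

end IsSpectralCut

section Compact

variable [CompleteSpace H]

open Module.End

namespace IsCompactOperator

theorem hasEigenvalue_norm {T : H →L[ℝ] H} (hTc : IsCompactOperator T)
    (hTsa : IsSelfAdjoint T) (hTpos : ∀ x, 0 ≤ ⟪T x, x⟫) (hT0 : T ≠ 0) :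
    HasEigenvalue (T : End ℝ H) ‖T‖ := by
  have hσ : (spectrum ℝ T).Nonempty := by
    by_contra h
    rw [Set.not_nonempty_iff_eq_empty] at h
    have := T.spectralRadius_eq_nnnorm hTsa
    simp [spectralRadius, h] at this
    exact hT0 (by simpa using this.symm)
  obtain ⟨μ, hμσ, hμ⟩ := spectrum.exists_nnnorm_eq_spectralRadius_of_nonempty hσ
  rw [T.spectralRadius_eq_nnnorm hTsa, ENNReal.coe_inj, ← NNReal.coe_inj, coe_nnnorm,
    coe_nnnorm] at hμ
  have hμ0 : μ ≠ 0 := by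
    rintro rfl
    exact hT0 (norm_eq_zero.1 (by simpa using hμ.symm))
  have hμT := (hTc.hasEigenvalue_iff_mem_spectrum hμ0).2 hμσ
  have : 0 ≤ μ := eigenvalue_nonneg_of_nonneg hμT fun x => by
    simpa [real_inner_comm] using hTpos x
  rwa [← hμ, Real.norm_of_nonneg this]

theorem exists_eigenvector_forall_inner_le [Nontrivial H] {T : H →L[ℝ] H}
    (hTc : IsCompactOperator T) (hTsa : IsSelfAdjoint T) (hTpos : ∀ x, 0 ≤ ⟪T x, x⟫) :
    ∃ e ≠ 0, ∃ μ, T e = μ • e ∧ ∀ x, ⟪T x, x⟫ ≤ μ * ‖x‖ ^ 2 := by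
  by_cases hT0 : T = 0
  · obtain ⟨e, he⟩ := exists_ne (0 : H)
    exact ⟨e, he, 0, by simp [hT0], fun x => by simp [hT0]⟩
  obtain ⟨e, he⟩ := (hTc.hasEigenvalue_norm hTsa hTpos hT0).exists_hasEigenvector
  exact ⟨e, he.2, ‖T‖, he.apply_eq_smul, fun x => le_of_abs_le (abs_inner_apply_self_le T x)⟩

theorem exists_mem_eigenvector_forall_inner_le {B : H →L[ℝ] H}
    (hBc : IsCompactOperator B) (hBsa : IsSelfAdjoint B) (hBpos : ∀ x, 0 ≤ ⟪B x, x⟫)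
    {W : Submodule ℝ H} [CompleteSpace W] (hW : ∀ x ∈ W, B x ∈ W) (hW0 : W ≠ ⊥) :
    ∃ e ∈ W, e ≠ 0 ∧ ∃ μ, B e = μ • e ∧ ∀ x ∈ W, ⟪B x, x⟫ ≤ μ * ‖x‖ ^ 2 := by
  have : Nontrivial W := Submodule.nontrivial_iff_ne_bot.2 hW0
  have hc : IsCompactOperator (B.restrict hW) := hBc.restrict' (f := (B : H →ₗ[ℝ] H)) hW
  have hsa : IsSelfAdjoint (B.restrict hW) :=
    (ContinuousLinearMap.isSelfAdjoint_iff_isSymmetric).2 (hBsa.isSymmetric.restrict_invariant hW)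
  obtain ⟨e, he, μ, hBe, hμ⟩ := hc.exists_eigenvector_forall_inner_le hsa fun x => hBpos x
  exact ⟨e, e.2, by simpa using he, μ, congrArg Subtype.val hBe, fun x hx => hμ ⟨x, hx⟩⟩

theorem exists_isSpectralCut {B : H →L[ℝ] H} (hBc : IsCompactOperator B)
    (hBsa : IsSelfAdjoint B) (hBpos : ∀ x, 0 ≤ ⟪B x, x⟫) (N : ℕ) :
    ∃ (S : Submodule ℝ H) (m : ℝ), FiniteDimensional ℝ S ∧ IsSpectralCut B S m ∧ finrank ℝ S ≤ N ∧
      (finrank ℝ S = N ∨ Sᗮ = ⊥) := by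
  -- In finite dimension the construction stops once `S` is the whole space.
  induction N with
  | zero => exact ⟨⊥, ‖B‖, inferInstance, .bot B, by simp, by simp⟩
  | succ N ih =>
    obtain ⟨S, m, _, hS, hSN, hSN' | hS0⟩ := ih
    · by_cases hS0 : Sᗮ = ⊥
      · exact ⟨S, m, inferInstance, hS, by omega, Or.inr hS0⟩
      have hinv : ∀ x ∈ Sᗮ, B x ∈ Sᗮ := fun x hx u hu => by
        rw [← ContinuousLinearMap.coe_coe, ← hBsa.isSymmetric u x]
        exact hx _ (hS.mapsTo u hu)
      obtain ⟨e, he, he0, μ, hBe, hμ⟩ :=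
        hBc.exists_mem_eigenvector_forall_inner_le hBsa hBpos hinv hS0
      refine ⟨S ⊔ span ℝ {e}, μ, inferInstance, hS.sup_span_singleton he he0 hBe hμ, ?_, ?_⟩ <;>
        rw [finrank_sup_span_orthogonal he he0] <;> omega
    · exact ⟨S, m, inferInstance, hS, by omega, Or.inr hS0⟩

theorem exists_finrank_le_forall_inner_le_lambdaN {B : H →L[ℝ] H}
    (hBc : IsCompactOperator B) (hBsa : IsSelfAdjoint B) (hBpos : ∀ x, 0 ≤ ⟪B x, x⟫) {N : ℕ}
    (hN : 0 < N) :
    ∃ S : Submodule ℝ H, FiniteDimensional ℝ S ∧ finrank ℝ S ≤ N ∧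
      ∀ x ∈ Sᗮ, ⟪B x, x⟫ ≤ lambdaN B N * ‖x‖ ^ 2 := by
  obtain ⟨S, m, _, hS, hSN, hSN' | hS0⟩ := hBc.exists_isSpectralCut hBsa hBpos N
  · refine ⟨S, inferInstance, hSN, fun x hx => (hS.inner_le x hx).trans ?_⟩
    gcongr
    exact hS.le_lambdaN hSN' hN
  · refine ⟨S, inferInstance, hSN, fun x hx => ?_⟩
    rw [hS0, Submodule.mem_bot] at hx
    simp [hx]

end IsCompactOperator

theorem lambdaN_add_le {A B : H →L[ℝ] H} (hApos : ∀ x, 0 ≤ ⟪A x, x⟫) (hBc : IsCompactOperator B)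
    (hBsa : IsSelfAdjoint B) (hBpos : ∀ x, 0 ≤ ⟪B x, x⟫) {n N : ℕ} (hN : 0 < N) (hNn : N < n) :
    lambdaN (A + B) n ≤ lambdaN A (n - N) + lambdaN B N := by
  obtain ⟨S, _, hSN, hS⟩ := hBc.exists_finrank_le_forall_inner_le_lambdaN hBsa hBpos hN
  refine lambdaN_le (add_nonneg (lambdaN_nonneg hApos _) (lambdaN_nonneg hBpos _)) fun F hF => ?_
  have : FiniteDimensional ℝ F := .of_finrank_pos (by omega)
  have hdim := F.finrank_sub_le_finrank_inf_ker (S.orthogonalProjectionOnto : H →ₗ[ℝ] S)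
  rw [ker_orthogonalProjectionOnto] at hdim
  obtain ⟨F', hF'le, hF'⟩ := (F ⊓ Sᗮ).exists_le_finrank_eq (k := n - N) (by omega)
  have hF'0 : F' ≠ ⊥ := by
    rintro rfl
    rw [finrank_bot] at hF'
    omega
  suffices infRayleigh (A + B) F - lambdaN B N ≤ infRayleigh A F' by
    linarith [infRayleigh_le_lambdaN A hF']
  refine le_infRayleigh hF'0 fun x hx hx0 => ?_
  have hAB := infRayleigh_le (T := A + B) (hF'le hx).1 hx0
  have hB : ⟪B x, x⟫ / ⟪x, x⟫ ≤ lambdaN B N := by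
    rw [div_le_iff₀ (real_inner_self_pos.2 hx0), real_inner_self_eq_norm_sq]
    exact hS x (hF'le hx).2
  rw [add_apply, inner_add_left, add_div] at hAB
  linarith

end Compact

end Perturbation

section SqrtAsymptotics

open Topology

theorem tendsto_nat_sqrt_atTop : Tendsto Nat.sqrt atTop atTop :=
  tendsto_atTop_atTop.2 fun b => ⟨b * b, fun _ hn => Nat.le_sqrt.2 hn⟩

theorem tendsto_sub_nat_sqrt_atTop : Tendsto (fun n => n - Nat.sqrt n) atTop atTop := by
  refine tendsto_atTop_atTop.2 fun b => ⟨4 + 2 * b, fun n hn => ?_⟩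
  have h2 : 2 ≤ Nat.sqrt n := Nat.le_sqrt.2 (by omega)
  have : 2 * Nat.sqrt n ≤ n := (Nat.mul_le_mul_right _ h2).trans (Nat.sqrt_le n)
  omega

theorem tendsto_nat_sqrt_div_self : Tendsto (fun n : ℕ => (Nat.sqrt n : ℝ) / n) atTop (𝓝 0) := by
  have hinv : Tendsto (fun n : ℕ => (Nat.sqrt n : ℝ)⁻¹) atTop (𝓝 0) :=
    (tendsto_natCast_atTop_atTop.comp tendsto_nat_sqrt_atTop).inv_tendsto_atTop
  refine squeeze_zero' (Eventually.of_forall fun n => by positivity) ?_ hinv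
  filter_upwards [eventually_ge_atTop 1] with n hn
  have hk : (0 : ℝ) < Nat.sqrt n := by exact_mod_cast Nat.sqrt_pos.2 hn
  rw [div_le_iff₀ (by exact_mod_cast hn), inv_mul_eq_div, le_div_iff₀ hk]
  exact_mod_cast Nat.sqrt_le n

theorem tendsto_sub_nat_sqrt_div_self :
    Tendsto (fun n : ℕ => ((n - Nat.sqrt n : ℕ) : ℝ) / n) atTop (𝓝 1) := by
  have := tendsto_nat_sqrt_div_self.const_sub 1
  rw [sub_zero] at this
  refine this.congr' ?_
  filter_upwards [eventually_ge_atTop 1] with n hn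
  rw [Nat.cast_sub (Nat.sqrt_le_self n), sub_div, div_self (by positivity)]

theorem tendsto_pow_nat_sqrt_mul_rpow {ρ : ℝ} (hρ0 : 0 ≤ ρ) (hρ1 : ρ < 1) (s : ℝ) :
    Tendsto (fun n : ℕ => ρ ^ Nat.sqrt n * (n : ℝ) ^ s) atTop (𝓝 0) := by
  set M := ⌈s⌉₊
  have hlim : Tendsto (fun n : ℕ => 4 ^ M * ((Nat.sqrt n : ℝ) ^ (2 * M) * ρ ^ Nat.sqrt n))
      atTop (𝓝 0) := by
    simpa using ((tendsto_pow_const_mul_const_pow_of_lt_one (2 * M) hρ0 hρ1).comp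
      tendsto_nat_sqrt_atTop).const_mul (4 ^ M : ℝ)
  refine squeeze_zero' (Eventually.of_forall fun n => by positivity) ?_ hlim
  filter_upwards [eventually_ge_atTop 1] with n hn
  set k := Nat.sqrt n
  have hk : 1 ≤ k := Nat.sqrt_pos.2 hn
  have hnk : (n : ℝ) ≤ 4 * k ^ 2 := by
    have := Nat.lt_succ_sqrt n
    exact_mod_cast (by nlinarith : n ≤ 4 * k ^ 2)
  have hpow : (n : ℝ) ^ s ≤ 4 ^ M * k ^ (2 * M) :=
    calc (n : ℝ) ^ s ≤ (n : ℝ) ^ (M : ℝ) :=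
          Real.rpow_le_rpow_of_exponent_le (by exact_mod_cast hn) (Nat.le_ceil s)
      _ = (n : ℝ) ^ M := Real.rpow_natCast _ M
      _ ≤ (4 * k ^ 2) ^ M := by gcongr
      _ = 4 ^ M * k ^ (2 * M) := by rw [mul_pow, ← pow_mul]
  calc ρ ^ k * (n : ℝ) ^ s ≤ ρ ^ k * (4 ^ M * k ^ (2 * M)) := by gcongr
    _ = 4 ^ M * (k ^ (2 * M) * ρ ^ k) := by ring

theorem tendsto_div_rpow_of_le_of_le_sub_nat_sqrt_add {a b : ℕ → ℝ} {c s ρ : ℝ} (hc : 0 < c)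
    (hρ0 : 0 ≤ ρ) (hρ1 : ρ < 1) (ha : Tendsto (fun n : ℕ => a n / (c * (n : ℝ) ^ (-s))) atTop (𝓝 1))
    (hlow : ∀ n, a n ≤ b n)
    (hup : ∀ᶠ n in atTop, b n ≤ a (n - Nat.sqrt n) + ρ ^ Nat.sqrt n) :
    Tendsto (fun n : ℕ => b n / (c * (n : ℝ) ^ (-s))) atTop (𝓝 1) := by
  have hlim : Tendsto (fun n : ℕ =>
      a (n - Nat.sqrt n) / (c * ((n - Nat.sqrt n : ℕ) : ℝ) ^ (-s))
        * (((n - Nat.sqrt n : ℕ) : ℝ) / n) ^ (-s) + ρ ^ Nat.sqrt n * (n : ℝ) ^ s / c)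
      atTop (𝓝 1) := by
    simpa using ((ha.comp tendsto_sub_nat_sqrt_atTop).mul
      (tendsto_sub_nat_sqrt_div_self.rpow_const (Or.inl one_ne_zero))).add
      ((tendsto_pow_nat_sqrt_mul_rpow hρ0 hρ1 s).div_const c)
  refine tendsto_of_tendsto_of_tendsto_of_le_of_le' ha hlim ?_ ?_
  · filter_upwards [eventually_ge_atTop 1] with n hn
    gcongr
    exact hlow n
  · filter_upwards [hup, eventually_ge_atTop 2] with n hn hn2
    have hm : (0 : ℝ) < (n - Nat.sqrt n : ℕ) := by
      exact_mod_cast Nat.sub_pos_of_lt (Nat.sqrt_lt_self (by omega))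
    have hn : (0 : ℝ) < n := by exact_mod_cast (by omega : 0 < n)
    calc b n / (c * (n : ℝ) ^ (-s))
        ≤ (a (n - Nat.sqrt n) + ρ ^ Nat.sqrt n) / (c * (n : ℝ) ^ (-s)) := by gcongr
      _ = _ := by
        rw [Real.div_rpow hm.le hn.le, Real.rpow_neg hn.le s]
        field_simp

end SqrtAsymptotics

theorem stmt_15_general {H : Type*} [NormedAddCommGroup H] [InnerProductSpace ℝ H] [CompleteSpace H]
    (A B : H →L[ℝ] H) (hBc : IsCompactOperator B)
    (hBsa : IsSelfAdjoint B)
    (hApos : ∀ x : H, 0 ≤ ⟪A x, x⟫) (hBpos : ∀ x : H, 0 ≤ ⟪B x, x⟫)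
    (c s ρ : ℝ) (hc : 0 < c) (hρ0 : 0 ≤ ρ) (hρ1 : ρ < 1)
    (hA : Tendsto (fun n : ℕ => lambdaN A n / (c * (n : ℝ) ^ (-s))) atTop (nhds 1))
    (hB : ∀ N : ℕ, lambdaN B N ≤ ρ ^ N) :
    Tendsto (fun n : ℕ => lambdaN (A + B) n / (c * (n : ℝ) ^ (-s))) atTop (nhds 1) := by
  refine tendsto_div_rpow_of_le_of_le_sub_nat_sqrt_add hc hρ0 hρ1 hA
    (lambdaN_le_lambdaN_add hBpos) ?_
  filter_upwards [eventually_ge_atTop 2] with n hn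
  calc lambdaN (A + B) n ≤ lambdaN A (n - Nat.sqrt n) + lambdaN B (Nat.sqrt n) :=
        lambdaN_add_le hApos hBc hBsa hBpos (Nat.sqrt_pos.2 (by omega))
          (Nat.sqrt_lt_self (by omega))
    _ ≤ lambdaN A (n - Nat.sqrt n) + ρ ^ Nat.sqrt n := by gcongr; exact hB _

theorem stmt_15 {H : Type*} [NormedAddCommGroup H] [InnerProductSpace ℝ H] [CompleteSpace H]
    (A B : H →L[ℝ] H) (hAc : IsCompactOperator A) (hBc : IsCompactOperator B)
    (hAsa : IsSelfAdjoint A) (hBsa : IsSelfAdjoint B)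
    (hApos : ∀ x : H, 0 ≤ ⟪A x, x⟫) (hBpos : ∀ x : H, 0 ≤ ⟪B x, x⟫)
    (c s ρ : ℝ) (hc : 0 < c) (hs : 0 < s) (hρ0 : 0 ≤ ρ) (hρ1 : ρ < 1)
    (hA : Tendsto (fun n : ℕ => lambdaN A n / (c * (n : ℝ) ^ (-s))) atTop (nhds 1))
    (hB : ∀ N : ℕ, lambdaN B N ≤ ρ ^ N) :
    Tendsto (fun n : ℕ => lambdaN (A + B) n / (c * (n : ℝ) ^ (-s))) atTop (nhds 1) :=
  stmt_15_general A B hBc hBsa hApos hBpos c s ρ hc hρ0 hρ1 hA hB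
end

section
/- Let (λₙ)_{n≥1} and (ψₙ)_{n≥1} be sequences of positive reals with ∑ₙ ψₙ²/λₙ² < ∞ and ∑ₙ ψₙ²/λₙ³ = ∞. Define, for λ > 0, G(λ) = ∑ₙ ψₙ²/(λₙ(D/λ + λₙ)) where D > 0 is a constant. Then G(λ) → ∑ₙ ψₙ²/λₙ² as λ → ∞, and λ·(∑ₙ ψₙ²/λₙ² − G(λ)) = D·∑ₙ ψₙ²/(λₙ²(λₙ + D/λ)) → ∞ as λ → ∞. -/
/-!
Put `ε = D / l`, so that `l → ∞` becomes `ε → 0⁺`. The terms `w / (λ (ε + λ))` increase to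
`w / λ²` and are dominated by it, which gives the limit of `G`. The algebraic identity
`w / λ² - w / (λ (ε + λ)) = ε · w / (λ² (λ + ε))` turns `l (∑ w / λ² - G)` into
`D ∑ w / (λ² (λ + ε))`, whose terms increase to `w / λ³`; since `∑ w / λ³` diverges, a
Fatou-type argument on finite partial sums shows that these sums tend to infinity.
-/

open Filter Topology

theorem tendsto_tsum_atTop_of_not_summable {ι α : Type*} {l : Filter α} {f : ι → ℝ}
    {g : α → ι → ℝ} (hf₀ : 0 ≤ f) (hf : ¬ Summable f)
    (hg : ∀ i, Tendsto (fun a => g a i) l (𝓝 (f i)))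
    (hg₀ : ∀ᶠ a in l, 0 ≤ g a) (hgs : ∀ᶠ a in l, Summable (g a)) :
    Tendsto (fun a => ∑' i, g a i) l atTop := by
  refine tendsto_atTop.2 fun C => ?_
  obtain ⟨s, hs⟩ : ∃ s : Finset ι, C < ∑ i ∈ s, f i := by
    by_contra! h
    exact hf (summable_of_sum_le hf₀ h)
  have hpartial : ∀ᶠ a in l, C < ∑ i ∈ s, g a i :=
    (tendsto_finsetSum s fun i _ => hg i).eventually (eventually_gt_nhds hs)
  filter_upwards [hpartial, hg₀, hgs] with a ha hga hgsa
  exact ha.le.trans (hgsa.sum_le_tsum s fun i _ => hga i)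

section Terms

variable {w x ε : ℝ}

theorem div_mul_add_le_div_sq (hw : 0 ≤ w) (hx : 0 < x) (hε : 0 ≤ ε) :
    w / (x * (ε + x)) ≤ w / x ^ 2 := by
  rw [sq]
  gcongr
  linarith

theorem div_sq_mul_add_le (hw : 0 ≤ w) (hx : 0 < x) (hε : 0 < ε) :
    w / (x ^ 2 * (x + ε)) ≤ ε⁻¹ * (w / x ^ 2) := by
  rw [inv_mul_eq_div, div_div]
  gcongr
  linarith

theorem div_sq_sub_div_mul_add (hx : x ≠ 0) (hεx : ε + x ≠ 0) :
    w / x ^ 2 - w / (x * (ε + x)) = ε * (w / (x ^ 2 * (x + ε))) := by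
  rw [add_comm ε x] at hεx ⊢
  field_simp
  ring

theorem tendsto_div_mul_add_nhds_zero (hx : x ≠ 0) :
    Tendsto (fun ε => w / (x * (ε + x))) (𝓝 0) (𝓝 (w / x ^ 2)) := by
  have hcont : ContinuousAt (fun ε => w / (x * (ε + x))) 0 := by
    fun_prop (disch := simpa using hx)
  simpa [sq] using hcont.tendsto

theorem tendsto_div_sq_mul_add_nhds_zero (hx : x ≠ 0) :
    Tendsto (fun ε => w / (x ^ 2 * (x + ε))) (𝓝 0) (𝓝 (w / x ^ 3)) := by
  have hcont : ContinuousAt (fun ε => w / (x ^ 2 * (x + ε))) 0 := by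
    fun_prop (disch := simpa using hx)
  simpa [pow_succ] using hcont.tendsto

end Terms

section Series

variable {ι : Type*} {lam w : ι → ℝ} {ε : ℝ}

theorem summable_div_mul_add (hlam : ∀ i, 0 < lam i) (hw : 0 ≤ w)
    (h2 : Summable fun i => w i / lam i ^ 2) (hε : 0 ≤ ε) :
    Summable fun i => w i / (lam i * (ε + lam i)) :=
  h2.of_nonneg_of_le (fun i => div_nonneg (hw i) (by nlinarith [hlam i]))
    fun i => div_mul_add_le_div_sq (hw i) (hlam i) hε

theorem summable_div_sq_mul_add (hlam : ∀ i, 0 < lam i) (hw : 0 ≤ w)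
    (h2 : Summable fun i => w i / lam i ^ 2) (hε : 0 < ε) :
    Summable fun i => w i / (lam i ^ 2 * (lam i + ε)) :=
  (h2.mul_left ε⁻¹).of_nonneg_of_le
    (fun i => div_nonneg (hw i) (by nlinarith [hlam i, sq_nonneg (lam i)]))
    fun i => div_sq_mul_add_le (hw i) (hlam i) hε

theorem tsum_div_sq_sub_tsum_div_mul_add (hlam : ∀ i, 0 < lam i) (hw : 0 ≤ w)
    (h2 : Summable fun i => w i / lam i ^ 2) (hε : 0 ≤ ε) :
    ∑' i, w i / lam i ^ 2 - ∑' i, w i / (lam i * (ε + lam i)) =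
      ε * ∑' i, w i / (lam i ^ 2 * (lam i + ε)) := by
  rw [← h2.tsum_sub (summable_div_mul_add hlam hw h2 hε), ← tsum_mul_left]
  exact tsum_congr fun i =>
    div_sq_sub_div_mul_add (hlam i).ne' (by linarith [hlam i])

theorem tendsto_tsum_div_mul_add (hlam : ∀ i, 0 < lam i) (hw : 0 ≤ w)
    (h2 : Summable fun i => w i / lam i ^ 2) :
    Tendsto (fun ε => ∑' i, w i / (lam i * (ε + lam i))) (𝓝[>] 0)
      (𝓝 (∑' i, w i / lam i ^ 2)) := by
  refine tendsto_tsum_of_dominated_convergence h2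
    (fun i => (tendsto_div_mul_add_nhds_zero (hlam i).ne').mono_left nhdsWithin_le_nhds) ?_
  filter_upwards [self_mem_nhdsWithin] with ε (hε : 0 < ε) i
  rw [Real.norm_of_nonneg (div_nonneg (hw i) (by nlinarith [hlam i]))]
  exact div_mul_add_le_div_sq (hw i) (hlam i) hε.le

theorem tendsto_tsum_div_sq_mul_add_atTop (hlam : ∀ i, 0 < lam i) (hw : 0 ≤ w)
    (h2 : Summable fun i => w i / lam i ^ 2) (h3 : ¬ Summable fun i => w i / lam i ^ 3) :
    Tendsto (fun ε => ∑' i, w i / (lam i ^ 2 * (lam i + ε))) (𝓝[>] 0) atTop := by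
  refine tendsto_tsum_atTop_of_not_summable (fun i => div_nonneg (hw i) (pow_pos (hlam i) 3).le)
    h3 (fun i => (tendsto_div_sq_mul_add_nhds_zero (hlam i).ne').mono_left nhdsWithin_le_nhds)
    ?_ ?_
  · filter_upwards [self_mem_nhdsWithin] with ε (hε : 0 < ε) i
    exact div_nonneg (hw i) (by nlinarith [hlam i, sq_nonneg (lam i)])
  · filter_upwards [self_mem_nhdsWithin] with ε (hε : 0 < ε)
    exact summable_div_sq_mul_add hlam hw h2 hε

end Series

theorem stmt_16_general (lam ψ : ℕ → ℝ) (D : ℝ) (hD : 0 < D)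
    (hlam : ∀ n, 0 < lam n)
    (h2 : Summable fun n => ψ n ^ 2 / lam n ^ 2)
    (h3 : ¬ Summable fun n => ψ n ^ 2 / lam n ^ 3) :
    Tendsto (fun l : ℝ => ∑' n, ψ n ^ 2 / (lam n * (D / l + lam n))) atTop
      (nhds (∑' n, ψ n ^ 2 / lam n ^ 2)) ∧
    (∀ l : ℝ, 0 < l →
      l * ((∑' n, ψ n ^ 2 / lam n ^ 2) - ∑' n, ψ n ^ 2 / (lam n * (D / l + lam n))) =
        D * ∑' n, ψ n ^ 2 / (lam n ^ 2 * (lam n + D / l))) ∧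
    Tendsto (fun l : ℝ =>
        l * ((∑' n, ψ n ^ 2 / lam n ^ 2) - ∑' n, ψ n ^ 2 / (lam n * (D / l + lam n))))
      atTop atTop := by
  have hw : 0 ≤ fun n => ψ n ^ 2 := fun n => sq_nonneg (ψ n)
  have hε : Tendsto (fun l : ℝ => D / l) atTop (𝓝[>] 0) :=
    tendsto_nhdsWithin_iff.2 ⟨tendsto_const_nhds.div_atTop tendsto_id,
      (eventually_gt_atTop 0).mono fun _ hl => div_pos hD hl⟩
  have hidentity : ∀ l : ℝ, 0 < l →
      l * ((∑' n, ψ n ^ 2 / lam n ^ 2) - ∑' n, ψ n ^ 2 / (lam n * (D / l + lam n))) =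
        D * ∑' n, ψ n ^ 2 / (lam n ^ 2 * (lam n + D / l)) := fun l hl => by
    rw [tsum_div_sq_sub_tsum_div_mul_add hlam hw h2 (by positivity), ← mul_assoc,
      mul_div_cancel₀ D hl.ne']
  refine ⟨(tendsto_tsum_div_mul_add hlam hw h2).comp hε, hidentity, ?_⟩
  refine Tendsto.congr' ?_
    (((tendsto_tsum_div_sq_mul_add_atTop hlam hw h2 h3).comp hε).const_mul_atTop hD)
  filter_upwards [eventually_gt_atTop 0] with l hl
  exact (hidentity l hl).symm

theorem stmt_16 (lam ψ : ℕ → ℝ) (D : ℝ) (hD : 0 < D)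
    (hlam : ∀ n, 0 < lam n) (hψ : ∀ n, 0 < ψ n)
    (h2 : Summable fun n => ψ n ^ 2 / lam n ^ 2)
    (h3 : ¬ Summable fun n => ψ n ^ 2 / lam n ^ 3) :
    Tendsto (fun l : ℝ => ∑' n, ψ n ^ 2 / (lam n * (D / l + lam n))) atTop
      (nhds (∑' n, ψ n ^ 2 / lam n ^ 2)) ∧
    (∀ l : ℝ, 0 < l →
      l * ((∑' n, ψ n ^ 2 / lam n ^ 2) - ∑' n, ψ n ^ 2 / (lam n * (D / l + lam n))) =
        D * ∑' n, ψ n ^ 2 / (lam n ^ 2 * (lam n + D / l))) ∧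
    Tendsto (fun l : ℝ =>
        l * ((∑' n, ψ n ^ 2 / lam n ^ 2) - ∑' n, ψ n ^ 2 / (lam n * (D / l + lam n))))
      atTop atTop :=
  stmt_16_general lam ψ D hD hlam h2 h3
end

section
/- Let ψₙ² ≍ B·n^{−6} and λₙ ≍ A·n^{−2} (i.e., ψₙ² = B n^{−6}(1+o(1)) and λₙ = A n^{−2}(1+o(1)) with A, B > 0). Then as λ → ∞, ∑_{n≥1} ψₙ²/(λₙ²(λₙ + D/λ)) = (B/A^{5/2})·(π/2)·√(λ/D)·(1+o(1)) for any constant D > 0. -/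
open Real Filter Topology Asymptotics

/-
Comparing `∑ 1 / (1 + (s n)²)` with `∫ dx / (1 + (s x)²) = arctan (s x) / s` from both sides
squeezes `s * ∑_{n ≥ 1} 1 / (1 + (s n)²)` between `π/2 - arctan s` and `π/2`, so the series is
`~ π / (2 s)` as `s → 0⁺`. With `s = √(D / (l A))` the model terms
`B n⁻⁶ / ((A n⁻²)² (A n⁻² + D / l)) = (B / A³) / (1 + (s n)²)` therefore sum to
`~ (B / A^{5/2}) (π/2) √(l / D) → ∞`. The actual terms differ from the model terms by a relative
error `ratioError` that does not depend on `l` and tends to `0` in `n`; since every model term is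
at most `B / A³` while their sum diverges, the finitely many terms with a large error are negligible.
-/

lemma integral_one_div_one_add_mul_sq {s : ℝ} (hs : s ≠ 0) (a b : ℝ) :
    ∫ x in a..b, 1 / (1 + (s * x) ^ 2) = (arctan (s * b) - arctan (s * a)) / s := by
  rw [intervalIntegral.integral_comp_mul_left (fun x => 1 / (1 + x ^ 2)) hs,
    integral_one_div_one_add_sq, smul_eq_mul, inv_mul_eq_div]

lemma antitoneOn_one_div_one_add_mul_sq (s : ℝ) :
    AntitoneOn (fun x : ℝ => 1 / (1 + (s * x) ^ 2)) (Set.Ici 0) := by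
  intro x hx y _ hxy
  simp only [mul_pow]
  gcongr

lemma sum_range_one_div_one_add_mul_sq_le {s : ℝ} (hs : 0 < s) (N : ℕ) :
    ∑ i ∈ Finset.range N, 1 / (1 + (s * (i + 1 : ℕ)) ^ 2) ≤ π / 2 / s := by
  have h := ((antitoneOn_one_div_one_add_mul_sq s).mono Set.Icc_subset_Ici_self).sum_le_integral
    (x₀ := 0) (a := N)
  simp only [zero_add, integral_one_div_one_add_mul_sq hs.ne', mul_zero, arctan_zero, sub_zero] at h
  exact h.trans (div_le_div_of_nonneg_right (arctan_lt_pi_div_two _).le hs.le)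

lemma arctan_sub_div_le_sum_range {s : ℝ} (hs : 0 < s) (N : ℕ) :
    (arctan (s * (N + 1)) - arctan s) / s ≤
      ∑ i ∈ Finset.range N, 1 / (1 + (s * (i + 1 : ℕ)) ^ 2) := by
  have h := ((antitoneOn_one_div_one_add_mul_sq s).mono
    (Set.Icc_subset_Ici_self.trans (Set.Ici_subset_Ici.2 zero_le_one))).integral_le_sum
    (x₀ := 1) (a := N)
  simp only [integral_one_div_one_add_mul_sq hs.ne', mul_one] at h
  simpa [add_comm] using h

lemma summable_pnat_one_div_one_add_mul_sq {s : ℝ} (hs : 0 < s) :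
    Summable fun n : ℕ+ => 1 / (1 + (s * n) ^ 2) :=
  (summable_pnat_iff_summable_succ (f := fun n : ℕ => 1 / (1 + (s * n) ^ 2))).2 <|
    summable_of_sum_range_le (fun _ => by positivity) (sum_range_one_div_one_add_mul_sq_le hs)

lemma tsum_pnat_one_div_one_add_mul_sq_le {s : ℝ} (hs : 0 < s) :
    ∑' n : ℕ+, 1 / (1 + (s * n) ^ 2) ≤ π / 2 / s := by
  rw [tsum_pnat_eq_tsum_succ (f := fun n : ℕ => 1 / (1 + (s * n) ^ 2))]
  exact Real.tsum_le_of_sum_range_le (fun _ => by positivity)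
    (sum_range_one_div_one_add_mul_sq_le hs)

lemma le_tsum_pnat_one_div_one_add_mul_sq {s : ℝ} (hs : 0 < s) :
    (π / 2 - arctan s) / s ≤ ∑' n : ℕ+, 1 / (1 + (s * n) ^ 2) := by
  have hsum := (summable_pnat_iff_summable_succ
    (f := fun n : ℕ => 1 / (1 + (s * n) ^ 2))).1 (summable_pnat_one_div_one_add_mul_sq hs)
  rw [tsum_pnat_eq_tsum_succ (f := fun n : ℕ => 1 / (1 + (s * n) ^ 2))]
  refine le_of_tendsto_of_tendsto' ?_ hsum.hasSum.tendsto_sum_nat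
    (arctan_sub_div_le_sum_range hs)
  have hN : Tendsto (fun N : ℕ => s * (N + 1)) atTop atTop :=
    (tendsto_atTop_add_const_right _ 1 tendsto_natCast_atTop_atTop).const_mul_atTop hs
  exact ((tendsto_arctan_atTop.mono_right nhdsWithin_le_nhds).comp hN).sub_const _ |>.div_const _

theorem tsum_pnat_one_div_one_add_mul_sq_isEquivalent :
    (fun s : ℝ => ∑' n : ℕ+, 1 / (1 + (s * n) ^ 2)) ~[𝓝[>] 0] fun s => π / 2 / s := by
  refine isEquivalent_of_tendsto_one ?_
  have hlow : Tendsto (fun s : ℝ => (π / 2 - arctan s) / (π / 2)) (𝓝[>] 0) (𝓝 1) := by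
    have h : Continuous fun s : ℝ => (π / 2 - arctan s) / (π / 2) :=
      (continuous_const.sub continuous_arctan).div_const _
    exact (h.tendsto' 0 1 (by simp [pi_ne_zero])).mono_left nhdsWithin_le_nhds
  refine tendsto_of_tendsto_of_tendsto_of_le_of_le' hlow tendsto_const_nhds ?_ ?_
  all_goals filter_upwards [self_mem_nhdsWithin] with s (hs : 0 < s)
  all_goals rw [Pi.div_apply, div_div_eq_mul_div _ (π / 2) s]
  · have := le_tsum_pnat_one_div_one_add_mul_sq hs
    rw [div_le_iff₀ hs] at this
    exact div_le_div_of_nonneg_right this (by positivity)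
  · have := tsum_pnat_one_div_one_add_mul_sq_le hs
    rw [le_div_iff₀ hs] at this
    exact (div_le_one (by positivity)).2 this

theorem isEquivalent_tsum_of_abs_sub_le {α ι : Type*} {l : Filter α} {a t : α → ι → ℝ}
    {e : ι → ℝ} {C : ℝ} (he : Tendsto e cofinite (𝓝 0))
    (hT : Tendsto (fun x => ∑' i, t x i) l atTop)
    (ht : ∀ᶠ x in l, Summable (t x) ∧ ∀ i, 0 ≤ t x i ∧ t x i ≤ C)
    (hat : ∀ᶠ x in l, ∀ i, |a x i - t x i| ≤ e i * t x i) :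
    (fun x => ∑' i, a x i) ~[l] fun x => ∑' i, t x i := by
  classical
  refine isLittleO_iff.2 fun ε hε => ?_
  obtain ⟨S, hS⟩ : ∃ S : Finset ι, ∀ i ∉ S, |e i| ≤ ε / 2 := by
    have h := eventually_cofinite.1 (he.eventually (Metric.closedBall_mem_nhds 0 (half_pos hε)))
    exact ⟨h.toFinset, fun i hi => by simpa [Real.dist_eq] using hi⟩
  set E := ∑ i ∈ S, |e i| * C
  filter_upwards [ht, hat, hT.eventually_ge_atTop (2 * E / ε)] with x ⟨hsum, htC⟩ hax hTx
  set g : ι → ℝ := fun i => ε / 2 * t x i + if i ∈ S then |e i| * C else 0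
  have hg : HasSum g (ε / 2 * ∑' i, t x i + E) :=
    (hsum.hasSum.mul_left _).add <| by
      have h := hasSum_sum_of_ne_finset_zero (s := S) (L := .unconditional ι)
        (f := fun i => if i ∈ S then |e i| * C else 0) fun i hi => if_neg hi
      rwa [Finset.sum_congr rfl fun i hi => if_pos hi] at h
  have hbound : ∀ i, ‖a x i - t x i‖ ≤ g i := by
    intro i
    have h1 : |a x i - t x i| ≤ |e i| * t x i :=
      (hax i).trans (mul_le_mul_of_nonneg_right (le_abs_self _) (htC i).1)
    rw [Real.norm_eq_abs]
    by_cases hi : i ∈ S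
    · simp only [g, if_pos hi]
      nlinarith [(htC i).1, (htC i).2, abs_nonneg (e i)]
    · simp only [g, if_neg hi, add_zero]
      nlinarith [(htC i).1, hS i hi]
  have hsub : Summable fun i => a x i - t x i := .of_norm_bounded hg.summable hbound
  have ha : Summable (a x) := by simpa using hsub.add hsum
  have hT0 : 0 ≤ ∑' i, t x i := tsum_nonneg fun i => (htC i).1
  calc ‖(fun x => ∑' i, a x i) x - (fun x => ∑' i, t x i) x‖
      = ‖∑' i, (a x i - t x i)‖ := by rw [ha.tsum_sub hsum]
    _ ≤ ε / 2 * ∑' i, t x i + E := tsum_of_norm_bounded hg hbound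
    _ ≤ ε * ‖∑' i, t x i‖ := by
      rw [Real.norm_eq_abs, abs_of_nonneg hT0]
      rw [div_le_iff₀ hε] at hTx
      linarith

noncomputable def ratioError (ρ r : ℝ) : ℝ := |ρ / r ^ 2| * |r⁻¹ - 1| + |ρ / r ^ 2 - 1|

lemma abs_add_div_add_sub_one_le {u v d : ℝ} (hv : 0 < v) (hd : 0 ≤ d) :
    |(u + d) / (v + d) - 1| ≤ |(v / u)⁻¹ - 1| := by
  have hvd : 0 < v + d := by linarith
  rw [inv_div, div_sub_one hvd.ne', div_sub_one hv.ne', add_sub_add_right_eq_sub,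
    abs_div, abs_div, abs_of_pos hv, abs_of_pos hvd]
  exact div_le_div_of_nonneg_left (abs_nonneg _) hv (le_add_of_nonneg_right hd)

lemma abs_div_sub_div_le {p q u v d : ℝ} (hq : 0 < q) (hu : 0 < u) (hv : 0 < v) (hd : 0 ≤ d) :
    |p / (v ^ 2 * (v + d)) - q / (u ^ 2 * (u + d))| ≤
      ratioError (p / q) (v / u) * (q / (u ^ 2 * (u + d))) := by
  have hud : 0 < u + d := by linarith
  have hvd : 0 < v + d := by linarith
  set g := p / q / (v / u) ^ 2
  set f := (u + d) / (v + d)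
  have hsplit : p / (v ^ 2 * (v + d)) - q / (u ^ 2 * (u + d)) =
      (g * f - 1) * (q / (u ^ 2 * (u + d))) := by
    simp only [g, f]
    field_simp
  have hT : 0 < q / (u ^ 2 * (u + d)) := div_pos hq (mul_pos (pow_pos hu 2) hud)
  rw [hsplit, abs_mul, abs_of_pos hT]
  refine mul_le_mul_of_nonneg_right ?_ hT.le
  calc |g * f - 1| = |g * (f - 1) + (g - 1)| := by ring_nf
    _ ≤ |g| * |f - 1| + |g - 1| := by rw [← abs_mul]; exact abs_add_le _ _
    _ ≤ |g| * |(v / u)⁻¹ - 1| + |g - 1| := by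
      gcongr ?_ + _
      exact mul_le_mul_of_nonneg_left (abs_add_div_add_sub_one_le hv hd) (abs_nonneg g)
    _ = ratioError (p / q) (v / u) := rfl

lemma tendsto_ratioError {α : Type*} {l : Filter α} {ρ r : α → ℝ}
    (hρ : Tendsto ρ l (𝓝 1)) (hr : Tendsto r l (𝓝 1)) :
    Tendsto (fun n => ratioError (ρ n) (r n)) l (𝓝 0) := by
  have hg : Tendsto (fun n => ρ n / r n ^ 2) l (𝓝 (1 / 1 ^ 2)) :=
    hρ.div (hr.pow 2) (by norm_num)
  rw [one_pow, div_one] at hg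
  simpa [ratioError] using (hg.abs.mul ((hr.inv₀ one_ne_zero).sub_const 1).abs).add (hg.sub_const 1).abs

lemma mul_rpow_neg_six_div_eq {A B d x : ℝ} (hA : 0 < A) (hd : 0 ≤ d) (hx : 0 < x) :
    B * x ^ (-6 : ℝ) / ((A * x ^ (-2 : ℝ)) ^ 2 * (A * x ^ (-2 : ℝ) + d)) =
      B / A ^ 3 * (1 / (1 + (√(d / A) * x) ^ 2)) := by
  have h6 : x ^ (-6 : ℝ) = (x ^ 6)⁻¹ := by
    rw [show (-6 : ℝ) = -((6 : ℕ) : ℝ) by norm_num, rpow_neg hx.le, rpow_natCast]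
  have h2 : x ^ (-2 : ℝ) = (x ^ 2)⁻¹ := by
    rw [show (-2 : ℝ) = -((2 : ℕ) : ℝ) by norm_num, rpow_neg hx.le, rpow_natCast]
  simp only [h6, h2, mul_pow, sq_sqrt (div_nonneg hd hA.le)]
  field_simp

lemma tendsto_sqrt_div_div_nhdsGT_zero {A D : ℝ} (hA : 0 < A) (hD : 0 < D) :
    Tendsto (fun l : ℝ => √(D / l / A)) atTop (𝓝[>] 0) := by
  refine tendsto_nhdsWithin_iff.2 ⟨?_, ?_⟩
  · have h : Tendsto (fun l : ℝ => D / l / A) atTop (𝓝 0) := by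
      simpa using (tendsto_const_nhds.div_atTop tendsto_id).div_const A
    simpa using h.sqrt
  · filter_upwards [eventually_gt_atTop 0] with l hl
    exact sqrt_pos.2 (by positivity)

lemma tendsto_const_mul_sqrt_div_atTop {c D : ℝ} (hc : 0 < c) (hD : 0 < D) :
    Tendsto (fun l : ℝ => c * √(l / D)) atTop atTop :=
  (tendsto_sqrt_atTop.comp (tendsto_id.atTop_div_const hD)).const_mul_atTop hc

lemma div_rpow_five_div_two_mul_sqrt_eq {A B D l : ℝ} (hA : 0 < A) (hD : 0 < D) (hl : 0 < l) :
    B / A ^ 3 * (π / 2 / √(D / l / A)) = B / A ^ ((5 : ℝ) / 2) * (π / 2) * √(l / D) := by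
  have h52 : A ^ ((5 : ℝ) / 2) = A ^ 3 / √A := by
    rw [sqrt_eq_rpow, eq_div_iff (by positivity), ← rpow_add hA]
    norm_num
  rw [h52, sqrt_div' _ hA.le, sqrt_div' _ hl.le, sqrt_div' _ hD.le]
  field_simp

theorem tsum_pnat_mul_one_div_one_add_mul_sq_isEquivalent (B : ℝ) {A D : ℝ} (hA : 0 < A)
    (hD : 0 < D) :
    (fun l : ℝ => ∑' n : ℕ+, B / A ^ 3 * (1 / (1 + (√(D / l / A) * n) ^ 2))) ~[atTop]
      fun l => B / A ^ ((5 : ℝ) / 2) * (π / 2) * √(l / D) := by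
  have h := tsum_pnat_one_div_one_add_mul_sq_isEquivalent.comp_tendsto
    (tendsto_sqrt_div_div_nhdsGT_zero hA hD)
  refine ((IsEquivalent.refl (u := fun _ => B / A ^ 3)).mul h).congr_left
    (.of_forall fun l => (tsum_mul_left).symm) |>.congr_right ?_
  filter_upwards [eventually_gt_atTop 0] with l hl
  exact div_rpow_five_div_two_mul_sqrt_eq hA hD hl

theorem stmt_19 (A B D : ℝ) (hA : 0 < A) (hB : 0 < B) (hD : 0 < D)
    (lam ψ : ℕ → ℝ) (hlam : ∀ n, 0 < lam n)
    (hψa : Tendsto (fun n : ℕ => ψ n ^ 2 / (B * (n : ℝ) ^ (-6 : ℝ))) atTop (nhds 1))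
    (hla : Tendsto (fun n : ℕ => lam n / (A * (n : ℝ) ^ (-2 : ℝ))) atTop (nhds 1)) :
    Tendsto (fun l : ℝ =>
        (∑' n : ℕ+, ψ (n : ℕ) ^ 2 / (lam (n : ℕ) ^ 2 * (lam (n : ℕ) + D / l))) /
          (B / A ^ ((5 : ℝ) / 2) * (π / 2) * Real.sqrt (l / D)))
      atTop (nhds 1) := by
  have hmodel := tsum_pnat_mul_one_div_one_add_mul_sq_isEquivalent B hA hD
  have hpnat : Tendsto (fun n : ℕ+ => (n : ℕ)) cofinite atTop :=
    Nat.cofinite_eq_atTop ▸ PNat.coe_injective.tendsto_cofinite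
  have hactual : (fun l : ℝ => ∑' n : ℕ+, ψ n ^ 2 / (lam n ^ 2 * (lam n + D / l))) ~[atTop]
      fun l => ∑' n : ℕ+, B / A ^ 3 * (1 / (1 + (√(D / l / A) * n) ^ 2)) := by
    refine isEquivalent_tsum_of_abs_sub_le (C := B / A ^ 3)
      ((tendsto_ratioError hψa hla).comp hpnat)
      (hmodel.symm.tendsto_atTop (tendsto_const_mul_sqrt_div_atTop (by positivity) hD)) ?_ ?_
    · filter_upwards [eventually_gt_atTop 0] with l hl
      refine ⟨(summable_pnat_one_div_one_add_mul_sq (by positivity)).mul_left _, fun n =>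
        ⟨by positivity, mul_le_of_le_one_right (by positivity) ?_⟩⟩
      exact div_le_one_of_le₀ (by nlinarith [sq_nonneg (√(D / l / A) * n)]) (by positivity)
    · filter_upwards [eventually_gt_atTop 0] with l hl n
      rw [← mul_rpow_neg_six_div_eq hA (div_pos hD hl).le (Nat.cast_pos.2 n.pos)]
      exact abs_div_sub_div_le (by positivity) (by positivity) (hlam n) (by positivity)
  refine (isEquivalent_iff_tendsto_one ?_).1 (hactual.trans hmodel)
  filter_upwards [eventually_gt_atTop 0] with l hl
  positivity
end
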